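/- arXiv:2401.00156 — 2 statements merged into one kernel-verified Lean document; each statement's English description precedes it below -/
import Mathlib

section
/- Let p be a prime, let R be a radical p-subgroup of a finite group G, and put D = Z_G(R). Then R is a radical p-subgroup of the centralizer Z_G(D). -/
/-- The largest normal `p`-subgroup `O_p(G)` of a group `G`:
the join of all normal `p`-subgroups of `G`. -/
def pCore' (p : ℕ) (G : Type*) [Group G] : Subgroup G :=
  sSup {H : Subgroup G | H.Normal ∧ IsPGroup p H}

/-- `Q` is a radical `p`-subgroup of `G` if `Q = O_p(N_G(Q))`. -/
def IsRadicalPSubgroup (p : ℕ) {G : Type*} [Group G] (Q : Subgroup G) : Prop :=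
  Q.subgroupOf (Subgroup.normalizer (Q : Set G)) = pCore' p (Subgroup.normalizer (Q : Set G))

/-!
Put `N = N_G(R)` and `C = Z_G(Z_G(R))`. Since `N` normalizes `R`, it normalizes `Z_G(R)` and then
`C`, so `N_C(R) = N ∩ C` is a normal subgroup of `N`. Its `p`-core is characteristic in it, hence a
normal `p`-subgroup of `N`, and therefore lies in `O_p(N) = R`. Conversely `R` is a normal
`p`-subgroup of `N_C(R)`. The argument works for any subgroup `C ≥ R` normalized by `N`.
-/

open Subgroup

section pCore'

variable {p : ℕ} {X Y : Type*} [Group X] [Group Y]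

theorem le_pCore' {H : Subgroup X} (hH : H.Normal) (hp : IsPGroup p H) : H ≤ pCore' p X :=
  le_sSup ⟨hH, hp⟩

variable (p X) in
theorem pCore'_normal : (pCore' p X).Normal :=
  sSup_normal _ fun _ hH => hH.1

variable (p X) in
theorem isPGroup_pCore' [Finite X] : IsPGroup p (pCore' p X) := by
  have hclosed : SupClosed {H : Subgroup X | H.Normal ∧ IsPGroup p H} :=
    fun H ⟨hHn, hHp⟩ K ⟨hKn, hKp⟩ => ⟨sup_normal H K, hHp.to_sup_of_normal_right hKp⟩
  exact (hclosed.sSup_mem (Set.toFinite _) ⟨normal_bot, IsPGroup.of_bot⟩ subset_rfl).2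

theorem map_pCore'_le [Finite X] (e : X ≃* Y) : (pCore' p X).map e.toMonoidHom ≤ pCore' p Y :=
  le_pCore' ((pCore'_normal p X).map _ e.surjective) ((isPGroup_pCore' p X).map _)

instance pCore'_characteristic [Finite X] : (pCore' p X).Characteristic :=
  characteristic_iff_map_le.mpr map_pCore'_le

/-- The `p`-core of a normal subgroup lies in the `p`-core of the whole group. -/
theorem map_pCore'_le_of_injective [Finite Y] {f : X →* Y} (hf : Function.Injective f)
    (hnormal : f.range.Normal) : (pCore' p X).map f ≤ pCore' p Y := by
  have := Finite.of_injective f hf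
  let e := MonoidHom.ofInjective hf
  have hfe : f = f.range.subtype.comp e.toMonoidHom := by
    ext x
    simp [e, MonoidHom.ofInjective_apply]
  calc (pCore' p X).map f = ((pCore' p X).map e.toMonoidHom).map f.range.subtype := by
        rw [map_map, ← hfe]
    _ ≤ (pCore' p f.range).map f.range.subtype := map_mono (map_pCore'_le e)
    _ ≤ pCore' p Y := le_pCore' inferInstance ((isPGroup_pCore' p _).map _)

end pCore'

theorem Subgroup.normalizer_le_normalizer_centralizer {G : Type*} [Group G] (s : Set G) :
    normalizer s ≤ normalizer (centralizer s : Set G) := by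
  refine le_set_normalizer_iff.mpr fun g hg c hc => ?_
  have hs : MulAut.conj g '' s = s := mem_normalizer_iff_conj_image_eq.mp hg
  rw [← hs]
  exact map_centralizer_le_centralizer_image s (MulAut.conj g).toMonoidHom ⟨c, hc, rfl⟩

theorem IsRadicalPSubgroup.isPGroup {p : ℕ} {G : Type*} [Group G] [Finite G] {R : Subgroup G}
    (hR : IsRadicalPSubgroup p R) : IsPGroup p R :=
  (hR ▸ isPGroup_pCore' p _ : IsPGroup p (R.subgroupOf (normalizer (R : Set G)))).of_equiv
    (subgroupOfEquivOfLe le_normalizer)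

theorem IsRadicalPSubgroup.subgroupOf {p : ℕ} {G : Type*} [Group G] [Finite G]
    {R K : Subgroup G} (hR : IsRadicalPSubgroup p R) (hRK : R ≤ K)
    (hK : normalizer (R : Set G) ≤ normalizer (K : Set G)) :
    IsRadicalPSubgroup p (R.subgroupOf K) := by
  have hN' : normalizer ((R.subgroupOf K : Subgroup K) : Set K) =
      (normalizer (R : Set G)).subgroupOf K := (subgroupOf_normalizer_eq hRK).symm
  refine le_antisymm (le_pCore' normal_in_normalizer hR.isPGroup.comap_subtype.comap_subtype) ?_
  let f := (K.subtype.comp (normalizer ((R.subgroupOf K : Subgroup K) : Set K)).subtype).codRestrict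
    (normalizer (R : Set G)) fun x => by simpa [hN', mem_subgroupOf] using x.2
  have hf : Function.Injective f := fun x y hxy =>
    Subtype.ext <| Subtype.ext (congrArg Subtype.val hxy :)
  have hrange : f.range = K.subgroupOf (normalizer (R : Set G)) := by
    ext x
    refine ⟨?_, fun hx => ⟨⟨⟨x, hx⟩, by rw [hN', mem_subgroupOf]; exact x.2⟩, rfl⟩⟩
    rintro ⟨y, rfl⟩
    exact (y : K).2
  have hnormal : f.range.Normal := hrange ▸ normal_subgroupOf_of_le_normalizer hK
  intro x hx
  have hfx := map_pCore'_le_of_injective hf hnormal (mem_map_of_mem f hx)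
  rw [← hR] at hfx
  simpa [f, mem_subgroupOf] using hfx

theorem statement_4_general {G : Type*} [Group G] [Finite G] {p : ℕ}
    (R : Subgroup G) (hR : IsRadicalPSubgroup p R) :
    IsRadicalPSubgroup p
      (R.subgroupOf (Subgroup.centralizer ((Subgroup.centralizer (R : Set G) : Subgroup G) : Set G))) :=
  hR.subgroupOf (le_centralizer_iff.mp le_rfl)
    ((normalizer_le_normalizer_centralizer _).trans (normalizer_le_normalizer_centralizer _))

/-- Let `R` be a radical `p`-subgroup of a finite group `G` and put `D = Z_G(R)`.
Then `R` is a radical `p`-subgroup of `Z_G(D)`. -/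
theorem statement_4 {G : Type*} [Group G] [Finite G] {p : ℕ} (hp : p.Prime)
    (R : Subgroup G) (hR : IsRadicalPSubgroup p R) :
    IsRadicalPSubgroup p
      (R.subgroupOf (Subgroup.centralizer ((Subgroup.centralizer (R : Set G) : Subgroup G) : Set G))) :=
  statement_4_general R hR
end

section
/- Let q be an odd prime power and let V be a finite-dimensional vector space over F_q equipped with a nondegenerate bilinear form f which is either symmetric or alternating. Suppose X and Y are isometries of (V, f) satisfying XYX⁻¹Y⁻¹ = −id_V and X² = Y² = id_V. Let V₊ = ker(X − id) and V₋ = ker(X + id) be the ±1-eigenspaces of X. Then V = V₊ ⊕ V₋, f(V₊, V₋) = 0, the restrictions of f to V₊ and to V₋ are nondegenerate, dim V₊ = dim V₋ = (dim V)/2, and Y maps V₊ onto V₋ and V₋ onto V₊ (with Y restricted to V₊ and Y restricted to V₋ inverse to each other). -/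
/-!
As `q` is odd, `2` is invertible in `F`, so the involution `X` splits `V` into its `±1`
eigenspaces `V₊ ⊕ V₋`. These are orthogonal, since `B u w = B (X u) (X w) = -B u w` for
`u ∈ V₊`, `w ∈ V₋`, and an orthogonal splitting of a nondegenerate space has nondegenerate
summands. The relation `XY = -YX` makes `Y` exchange `V₊` and `V₋`, so they have equal dimension.
-/

open LinearMap

lemma FiniteField.two_ne_zero_of_odd_card {F : Type*} [Field F] [Fintype F]
    (h : Odd (Fintype.card F)) : (2 : F) ≠ 0 :=
  Ring.two_ne_zero fun hF => by
    have := FiniteField.even_card_of_char_two hF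
    rw [Nat.odd_iff] at h
    omega

namespace LinearMap

section Ring

variable {R M : Type*} [Ring R] [AddCommGroup M] [Module R M]

lemma mem_ker_sub_id {f : M →ₗ[R] M} {v : M} : v ∈ ker (f - id) ↔ f v = v := by
  simp [sub_eq_zero]

lemma mem_ker_add_id {f : M →ₗ[R] M} {v : M} : v ∈ ker (f + id) ↔ f v = -v := by
  simp [add_eq_zero_iff_eq_neg]

end Ring

lemma isCompl_ker_sub_id_ker_add_id {K V : Type*} [Field K] [AddCommGroup V] [Module K V]
    (h2 : (2 : K) ≠ 0) {f : V →ₗ[K] V} (hf : ∀ v, f (f v) = v) :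
    IsCompl (ker (f - id)) (ker (f + id)) := by
  constructor
  · rw [Submodule.disjoint_def]
    intro v hpos hneg
    rw [mem_ker_sub_id] at hpos
    rw [mem_ker_add_id, hpos] at hneg
    have : (2 : K) • v = 0 := by rw [two_smul]; nth_rw 1 [hneg]; exact neg_add_cancel v
    exact (smul_eq_zero_iff_right h2).1 this
  · rw [codisjoint_iff, eq_top_iff]
    intro v _
    refine Submodule.mem_sup.2
      ⟨(2 : K)⁻¹ • (v + f v), ?_, (2 : K)⁻¹ • (v - f v), ?_, ?_⟩
    · rw [mem_ker_sub_id, map_smul, map_add, hf, add_comm]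
    · rw [mem_ker_add_id, map_smul, map_sub, hf, ← smul_neg, neg_sub]
    · rw [← smul_add, add_add_sub_cancel, ← two_smul K, smul_smul, inv_mul_cancel₀ h2, one_smul]

end LinearMap

namespace LinearEquiv

variable {R M : Type*} [Ring R] [AddCommGroup M] [Module R M]

lemma apply_apply_eq_neg_of_commutator_eq_neg {f e : M ≃ₗ[R] M}
    (h : ∀ v, f (e (f.symm (e.symm v))) = -v) (v : M) : f (e v) = -e (f v) := by
  simpa using h (e (f v))

lemma apply_symm_apply_eq_neg_of_anticomm {f : M →ₗ[R] M} {e : M ≃ₗ[R] M}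
    (he : ∀ v, f (e v) = -e (f v)) (v : M) : f (e.symm v) = -e.symm (f v) := by
  have := congrArg e.symm (he (e.symm v))
  rw [apply_symm_apply, map_neg, symm_apply_apply] at this
  rw [this, neg_neg]

lemma map_ker_sub_id_of_anticomm {f : M →ₗ[R] M} (e : M ≃ₗ[R] M)
    (he : ∀ v, f (e v) = -e (f v)) : (ker (f - LinearMap.id)).map (e : M →ₗ[R] M) =
      ker (f + LinearMap.id) := by
  ext v
  rw [Submodule.mem_map_equiv, mem_ker_sub_id, mem_ker_add_id,
    apply_symm_apply_eq_neg_of_anticomm he, neg_eq_iff_eq_neg, ← map_neg,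
    e.symm.injective.eq_iff]

lemma map_ker_add_id_of_anticomm {f : M →ₗ[R] M} (e : M ≃ₗ[R] M)
    (he : ∀ v, f (e v) = -e (f v)) : (ker (f + LinearMap.id)).map (e : M →ₗ[R] M) =
      ker (f - LinearMap.id) :=
  (Submodule.map_symm_eq_iff e).1 <|
    e.symm.map_ker_sub_id_of_anticomm (apply_symm_apply_eq_neg_of_anticomm he)

end LinearEquiv

namespace LinearMap.BilinForm

lemma apply_eq_zero_of_isometry_of_eq_neg {K V : Type*} [Field K] [AddCommGroup V]
    [Module K V] (B : LinearMap.BilinForm K V) (h2 : (2 : K) ≠ 0) {f : V →ₗ[K] V}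
    (hf : ∀ u v, B (f u) (f v) = B u v) {u w : V} (hu : f u = u) (hw : f w = -w) :
    B u w = 0 := by
  have h := hf u w
  rw [hu, hw, map_neg] at h
  have : (2 : K) * B u w = 0 := by linear_combination -h
  exact (mul_eq_zero.1 this).resolve_left h2

lemma nondegenerate_restrict_of_codisjoint {R M : Type*} [CommRing R] [AddCommGroup M]
    [Module R M] (B : LinearMap.BilinForm R M) (hB : ∀ u, (∀ v, B u v = 0) → u = 0)
    {U W : Submodule R M} (hUW : Codisjoint U W) (horth : ∀ u ∈ U, ∀ w ∈ W, B u w = 0) :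
    ∀ u ∈ U, (∀ v ∈ U, B u v = 0) → u = 0 := by
  intro u hu hU
  refine hB u fun v => ?_
  obtain ⟨a, ha, b, hb, rfl⟩ := Submodule.mem_sup.1 (hUW.eq_top ▸ Submodule.mem_top (x := v))
  rw [map_add, hU a ha, horth u hu b hb, add_zero]

end LinearMap.BilinForm

theorem statement_15_general (q : ℕ) (hq : Odd q)
    (F : Type*) [Field F] [Fintype F] (hcard : Fintype.card F = q)
    (V : Type*) [AddCommGroup V] [Module F V] [FiniteDimensional F V]
    (B : LinearMap.BilinForm F V)
    (hnd : ∀ u : V, (∀ v : V, B u v = 0) → u = 0)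
    (X Y : V ≃ₗ[F] V)
    (hXiso : ∀ u v : V, B (X u) (X v) = B u v)
    (hcomm : ∀ v : V, X (Y (X.symm (Y.symm v))) = -v)
    (hX2 : ∀ v : V, X (X v) = v) :
    IsCompl (LinearMap.ker (X.toLinearMap - LinearMap.id))
        (LinearMap.ker (X.toLinearMap + LinearMap.id)) ∧
    (∀ u ∈ LinearMap.ker (X.toLinearMap - LinearMap.id),
      ∀ w ∈ LinearMap.ker (X.toLinearMap + LinearMap.id), B u w = 0) ∧
    (∀ u ∈ LinearMap.ker (X.toLinearMap - LinearMap.id),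
      (∀ v ∈ LinearMap.ker (X.toLinearMap - LinearMap.id), B u v = 0) → u = 0) ∧
    (∀ u ∈ LinearMap.ker (X.toLinearMap + LinearMap.id),
      (∀ v ∈ LinearMap.ker (X.toLinearMap + LinearMap.id), B u v = 0) → u = 0) ∧
    Module.finrank F (LinearMap.ker (X.toLinearMap - LinearMap.id)) =
      Module.finrank F (LinearMap.ker (X.toLinearMap + LinearMap.id)) ∧
    Module.finrank F V =
      2 * Module.finrank F (LinearMap.ker (X.toLinearMap - LinearMap.id)) ∧
    (LinearMap.ker (X.toLinearMap - LinearMap.id)).map Y.toLinearMap =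
      LinearMap.ker (X.toLinearMap + LinearMap.id) ∧
    (LinearMap.ker (X.toLinearMap + LinearMap.id)).map Y.toLinearMap =
      LinearMap.ker (X.toLinearMap - LinearMap.id) := by
  have h2 : (2 : F) ≠ 0 := FiniteField.two_ne_zero_of_odd_card (hcard ▸ hq)
  have hcompl := isCompl_ker_sub_id_ker_add_id h2 (f := X.toLinearMap) hX2
  have hanti := LinearEquiv.apply_apply_eq_neg_of_commutator_eq_neg hcomm
  have horth : ∀ u ∈ ker (X.toLinearMap - LinearMap.id),
      ∀ w ∈ ker (X.toLinearMap + LinearMap.id), B u w = 0 :=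
    fun u hu w hw => B.apply_eq_zero_of_isometry_of_eq_neg h2 (f := X.toLinearMap) hXiso
      (mem_ker_sub_id.1 hu) (mem_ker_add_id.1 hw)
  have horth' : ∀ w ∈ ker (X.toLinearMap + LinearMap.id),
      ∀ u ∈ ker (X.toLinearMap - LinearMap.id), B w u = 0 :=
    fun w hw u hu => B.flip.apply_eq_zero_of_isometry_of_eq_neg h2 (f := X.toLinearMap)
      (fun u v => hXiso v u) (mem_ker_sub_id.1 hu) (mem_ker_add_id.1 hw)
  have hmap := Y.map_ker_sub_id_of_anticomm (f := X.toLinearMap) hanti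
  have hrank : Module.finrank F (ker (X.toLinearMap - LinearMap.id)) =
      Module.finrank F (ker (X.toLinearMap + LinearMap.id)) := by
    rw [← hmap, LinearEquiv.finrank_map_eq]
  have hsum := Submodule.finrank_add_eq_of_isCompl hcompl
  exact ⟨hcompl, horth, B.nondegenerate_restrict_of_codisjoint hnd hcompl.codisjoint horth,
    B.nondegenerate_restrict_of_codisjoint hnd hcompl.codisjoint.symm horth', hrank,
    by omega, hmap, Y.map_ker_add_id_of_anticomm hanti⟩

/-- Let `q` be an odd prime power and `(V, B)` a finite-dimensional F_q-vector space with a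
nondegenerate bilinear form which is symmetric or alternating.  Suppose `X, Y` are isometries
of `(V, B)` with `XYX⁻¹Y⁻¹ = -id` and `X² = Y² = id`.  Let `V₊ = ker(X - id)` and
`V₋ = ker(X + id)`.  Then `V = V₊ ⊕ V₋`, `B(V₊, V₋) = 0`, the restrictions of `B` to `V₊` and
`V₋` are nondegenerate, `dim V₊ = dim V₋ = (dim V)/2`, and `Y` maps `V₊` onto `V₋` and `V₋`
onto `V₊`. -/
theorem statement_15 (q : ℕ) (hq : Odd q) (hpp : IsPrimePow q)
    (F : Type*) [Field F] [Fintype F] (hcard : Fintype.card F = q)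
    (V : Type*) [AddCommGroup V] [Module F V] [FiniteDimensional F V]
    (B : LinearMap.BilinForm F V)
    (hsa : (∀ u v : V, B u v = B v u) ∨ (∀ v : V, B v v = 0))
    (hnd : ∀ u : V, (∀ v : V, B u v = 0) → u = 0)
    (X Y : V ≃ₗ[F] V)
    (hXiso : ∀ u v : V, B (X u) (X v) = B u v)
    (hYiso : ∀ u v : V, B (Y u) (Y v) = B u v)
    (hcomm : ∀ v : V, X (Y (X.symm (Y.symm v))) = -v)
    (hX2 : ∀ v : V, X (X v) = v)
    (hY2 : ∀ v : V, Y (Y v) = v) :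
    IsCompl (LinearMap.ker (X.toLinearMap - LinearMap.id))
        (LinearMap.ker (X.toLinearMap + LinearMap.id)) ∧
    (∀ u ∈ LinearMap.ker (X.toLinearMap - LinearMap.id),
      ∀ w ∈ LinearMap.ker (X.toLinearMap + LinearMap.id), B u w = 0) ∧
    (∀ u ∈ LinearMap.ker (X.toLinearMap - LinearMap.id),
      (∀ v ∈ LinearMap.ker (X.toLinearMap - LinearMap.id), B u v = 0) → u = 0) ∧
    (∀ u ∈ LinearMap.ker (X.toLinearMap + LinearMap.id),
      (∀ v ∈ LinearMap.ker (X.toLinearMap + LinearMap.id), B u v = 0) → u = 0) ∧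
    Module.finrank F (LinearMap.ker (X.toLinearMap - LinearMap.id)) =
      Module.finrank F (LinearMap.ker (X.toLinearMap + LinearMap.id)) ∧
    Module.finrank F V =
      2 * Module.finrank F (LinearMap.ker (X.toLinearMap - LinearMap.id)) ∧
    (LinearMap.ker (X.toLinearMap - LinearMap.id)).map Y.toLinearMap =
      LinearMap.ker (X.toLinearMap + LinearMap.id) ∧
    (LinearMap.ker (X.toLinearMap + LinearMap.id)).map Y.toLinearMap =
      LinearMap.ker (X.toLinearMap - LinearMap.id) :=
  statement_15_general q hq F hcard V B hnd X Y hXiso hcomm hX2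
end
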